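/- arXiv:2310.06638 — 2 statements merged into one kernel-verified Lean document; each statement's English description precedes it below -/
import Mathlib

section
/- Let λ^{(1)}, …, λ^{(q)} be nonnegative rate vectors in ℝ^k. For every integer m ≥ 0 and every t ≥ 0, Σ_{(l_1,…,l_q) ∈ ℕ₀^q, l_1+⋯+l_q = m} ∏_{i=1}^{q} p(λ^{(i)}; l_i, t) = p(Σ_{i=1}^q λ^{(i)}; m, t). That is, the merged process of q independent GCPs is a GCP whose jump rate for jumps of size j equals β_j = Σ_{i=1}^q λ_j^{(i)}. -/
/-!
The generating function `∑ₙ p(λ; n, t) zⁿ` of a GCP is `∏ⱼ e^{λⱼ t (z^j - 1)}`: the numbers of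
jumps of the various sizes `j` are independent Poisson variables with means `λⱼ t`, and `Ω(k, n)`
indexes the ways the coefficient of `zⁿ` arises in this product. The left-hand side of the
merging identity is the `m`-th coefficient of the product of the generating functions of the `q`
processes, and since `e^{a (z - 1)} e^{b (z - 1)} = e^{(a + b) (z - 1)}`, that product is the
generating function of the GCP with rates `∑ᵢ λ⁽ⁱ⁾`.
-/

open Finset

/-- The set `Ω(k, n)` of tuples `x : Fin k → ℕ` with `∑_{j=1}^k j * x_j = n`
(`j : Fin k` represents the jump size `j + 1`). -/
def gcpOmega (k n : ℕ) : Finset (Fin k → ℕ) :=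
  (Fintype.piFinset fun _ : Fin k => Finset.range (n + 1)).filter
    fun x => ∑ j : Fin k, (j.1 + 1) * x j = n

/-- The probability mass function of the generalized counting process with jump
rates `lam j` for jumps of size `j + 1`, evaluated at state `n` and time `t`. -/
noncomputable def gcpPMF (k : ℕ) (lam : Fin k → ℝ) (n : ℕ) (t : ℝ) : ℝ :=
  ∑ x ∈ gcpOmega k n,
    ∏ j : Fin k, (lam j * t) ^ (x j) / (Nat.factorial (x j)) * Real.exp (-(lam j * t))

open PowerSeries

lemma mem_gcpOmega {k n : ℕ} {x : Fin k → ℕ} :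
    x ∈ gcpOmega k n ↔ ∑ j : Fin k, (j.1 + 1) * x j = n := by
  refine ⟨fun hx => (mem_filter.mp hx).2, fun hx => mem_filter.mpr ⟨?_, hx⟩⟩
  refine Fintype.mem_piFinset.mpr fun j => mem_range_succ_iff.mpr ?_
  calc x j ≤ (j.1 + 1) * x j := Nat.le_mul_of_pos_left _ j.1.succ_pos
    _ ≤ n := hx ▸ single_le_sum (fun i _ => Nat.zero_le ((i.1 + 1) * x i)) (mem_univ j)

lemma mem_filter_piFinset_range_sum_eq {ι : Type*} [Fintype ι] [DecidableEq ι] {n : ℕ}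
    {l : ι → ℕ} :
    l ∈ (Fintype.piFinset fun _ : ι => range (n + 1)).filter (fun l => ∑ i, l i = n) ↔
      ∑ i, l i = n := by
  refine ⟨fun hl => (mem_filter.mp hl).2, fun hl => mem_filter.mpr ⟨?_, hl⟩⟩
  exact Fintype.mem_piFinset.mpr fun i => mem_range_succ_iff.mpr
    (hl ▸ single_le_sum (fun i _ => Nat.zero_le (l i)) (mem_univ i))

theorem PowerSeries.coeff_prod_univ {ι R : Type*} [Fintype ι] [DecidableEq ι] [CommSemiring R]
    (f : ι → PowerSeries R) (n : ℕ) :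
    coeff n (∏ i, f i) =
      ∑ l ∈ (Fintype.piFinset fun _ : ι => range (n + 1)).filter (fun l => ∑ i, l i = n),
        ∏ i, coeff (l i) (f i) := by
  rw [coeff_prod]
  refine sum_equiv Finsupp.equivFunOnFinite (fun l => ?_) fun l _ => rfl
  rw [mem_filter_piFinset_range_sum_eq, mem_finsuppAntidiag]
  simp

lemma coeff_prod_expand_succ_eq_sum_gcpOmega {k : ℕ} {R : Type*} [CommRing R]
    (f : Fin k → PowerSeries R) (n : ℕ) :
    coeff n (∏ j : Fin k, expand (j.1 + 1) j.1.succ_ne_zero (f j)) =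
      ∑ x ∈ gcpOmega k n, ∏ j, coeff (x j) (f j) := by
  rw [coeff_prod_univ]
  symm
  refine sum_bij_ne_zero (fun x _ _ j => (j.1 + 1) * x j) (fun x hx _ => ?_)
    (fun x _ _ y _ _ hxy => ?_) (fun l hl hne => ?_) (fun x _ _ => ?_)
  · rw [mem_filter_piFinset_range_sum_eq]
    exact mem_gcpOmega.mp hx
  · funext j
    exact Nat.eq_of_mul_eq_mul_left j.1.succ_pos (congrFun hxy j)
  · have hdvd : ∀ j : Fin k, j.1 + 1 ∣ l j := fun j => by
      by_contra h
      exact hne (prod_eq_zero (mem_univ j) (coeff_expand_of_not_dvd _ _ _ h))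
    have hl_eq : (fun j : Fin k => (j.1 + 1) * (l j / (j.1 + 1))) = l :=
      funext fun j => Nat.mul_div_cancel' (hdvd j)
    refine ⟨fun j => l j / (j.1 + 1), mem_gcpOmega.mpr ?_, ?_, hl_eq⟩
    · rw [← mem_filter_piFinset_range_sum_eq.mp hl]
      exact sum_congr rfl fun j _ => congrFun hl_eq j
    · rw [← hl_eq] at hne
      simpa only [coeff_expand_mul] using hne
  · exact prod_congr rfl fun j _ => (coeff_expand_mul _ _ _ _).symm

/-- `e^{c (z - 1)}`, the probability generating function of the Poisson distribution
with mean `c`. -/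
noncomputable def poissonSeries (c : ℝ) : PowerSeries ℝ :=
  C (Real.exp (-c)) * rescale c (exp ℝ)

lemma coeff_poissonSeries (c : ℝ) (n : ℕ) :
    coeff n (poissonSeries c) = c ^ n / n.factorial * Real.exp (-c) := by
  rw [poissonSeries, coeff_C_mul, coeff_rescale, coeff_exp, map_div₀, map_one, map_natCast]
  ring

lemma poissonSeries_add (a b : ℝ) :
    poissonSeries (a + b) = poissonSeries a * poissonSeries b := by
  rw [poissonSeries, poissonSeries, poissonSeries, ← exp_mul_exp_eq_exp_add, neg_add,
    Real.exp_add, map_mul]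
  ring

lemma poissonSeries_zero : poissonSeries 0 = 1 := by
  simp [poissonSeries]

lemma prod_poissonSeries {ι : Type*} (s : Finset ι) (c : ι → ℝ) :
    ∏ i ∈ s, poissonSeries (c i) = poissonSeries (∑ i ∈ s, c i) := by
  induction s using Finset.cons_induction with
  | empty => rw [prod_empty, sum_empty, poissonSeries_zero]
  | cons i s hi ih => rw [prod_cons, sum_cons, ih, poissonSeries_add]

noncomputable def gcpSeries (k : ℕ) (lam : Fin k → ℝ) (t : ℝ) : PowerSeries ℝ :=
  ∏ j : Fin k, expand (j.1 + 1) j.1.succ_ne_zero (poissonSeries (lam j * t))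

lemma coeff_gcpSeries (k : ℕ) (lam : Fin k → ℝ) (t : ℝ) (n : ℕ) :
    coeff n (gcpSeries k lam t) = gcpPMF k lam n t := by
  simp only [gcpSeries, coeff_prod_expand_succ_eq_sum_gcpOmega, coeff_poissonSeries, gcpPMF]

lemma prod_gcpSeries {k : ℕ} {ι : Type*} (s : Finset ι) (lam : ι → Fin k → ℝ) (t : ℝ) :
    ∏ i ∈ s, gcpSeries k (lam i) t = gcpSeries k (fun j => ∑ i ∈ s, lam i j) t := by
  simp only [gcpSeries]
  rw [prod_comm]
  refine prod_congr rfl fun j _ => ?_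
  rw [← map_prod, prod_poissonSeries, sum_mul]

theorem merging_of_finitely_many_gcps_general (k : ℕ) (q : ℕ)
    (lam : Fin q → Fin k → ℝ) (t : ℝ) (m : ℕ) :
    ∑ l ∈ (Fintype.piFinset fun _ : Fin q => Finset.range (m + 1)).filter
        (fun l => ∑ i : Fin q, l i = m),
      ∏ i : Fin q, gcpPMF k (lam i) (l i) t
      = gcpPMF k (fun j => ∑ i : Fin q, lam i j) m t := by
  simp only [← coeff_gcpSeries]
  rw [← coeff_prod_univ, prod_gcpSeries]

/-- The merged process of `q` independent GCPs with rate vectors `lam i` is a GCP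
whose rate for jumps of size `j` is `β_j = ∑ i, lam i j`. -/
theorem merging_of_finitely_many_gcps (k : ℕ) (hk : 1 ≤ k) (q : ℕ) (hq : 1 ≤ q)
    (lam : Fin q → Fin k → ℝ) (hlam : ∀ i j, 0 ≤ lam i j) (t : ℝ) (ht : 0 ≤ t) (m : ℕ) :
    ∑ l ∈ (Fintype.piFinset fun _ : Fin q => Finset.range (m + 1)).filter
        (fun l => ∑ i : Fin q, l i = m),
      ∏ i : Fin q, gcpPMF k (lam i) (l i) t
      = gcpPMF k (fun j => ∑ i : Fin q, lam i j) m t :=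
  merging_of_finitely_many_gcps_general k q lam t m
end

section
/- For all a, n ∈ ℕ₀ and t ≥ 0, the joint probability mass function q(a,n,t) satisfies the differential equation d/dt q(a,n,t) = −Λ q(a,n,t) + Σ_{j=1}^{K₁} ν_j q(a−1, n−j, t) + Σ_{l=1}^{K₂} ρ_l q(a, n−l, t), where q(a', n', t) is taken to be 0 whenever a' < 0 or n' < 0; moreover the initial conditions hold: q(0,0,0) = 1 and q(a,n,0) = 0 whenever (a,n) ≠ (0,0). -/
/-!
Each summand of `q(a, n, t)` is `e^{-Λt}` times a product of Poisson weights `(x t)^r / r!`, and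
`d/dt (x t)^r / r! = x (x t)^(r-1) / (r-1)!`: differentiating a summand lowers one exponent by one
and multiplies by the corresponding rate. The tuples of `Θ(a, n)` with `r_j ≥ 1` are exactly the
translates by the unit vector `e_j` of `Θ(a - 1, n - j)`, and those with `s_l ≥ 1` the translates
of `Θ(a, n - l)`; this produces the two sums of the equation, while `e^{-Λt}` contributes `-Λ q`.
-/

open Finset

/-- The index set `Θ(a, n)` of pairs `(r, s)` with `∑_j r_j = a` and
`∑_j j·r_j + ∑_l l·s_l = n` (`j : Fin K1` represents jump size `j + 1`, and
`l : Fin K2` represents jump size `l + 1`). -/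
def jointTheta (K1 K2 a n : ℕ) : Finset ((Fin K1 → ℕ) × (Fin K2 → ℕ)) :=
  ((Fintype.piFinset fun _ : Fin K1 => Finset.range (a + 1)) ×ˢ
      (Fintype.piFinset fun _ : Fin K2 => Finset.range (n + 1))).filter
    fun p => (∑ j : Fin K1, p.1 j = a) ∧
      (∑ j : Fin K1, (j.1 + 1) * p.1 j) + (∑ l : Fin K2, (l.1 + 1) * p.2 l) = n

/-- The joint probability mass function of the number of packets of jumps from a
tracked merging component (with rates `nu`) and the state of the merged GCP
(the other components contributing aggregated rates `rho`). -/
noncomputable def jointPMF (K1 K2 : ℕ) (nu : Fin K1 → ℝ) (rho : Fin K2 → ℝ)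
    (a n : ℕ) (t : ℝ) : ℝ :=
  ∑ p ∈ jointTheta K1 K2 a n,
    (∏ j : Fin K1, (nu j * t) ^ (p.1 j) / (Nat.factorial (p.1 j))) *
      (∏ l : Fin K2, (rho l * t) ^ (p.2 l) / (Nat.factorial (p.2 l))) *
      Real.exp (-((∑ j : Fin K1, nu j) + ∑ l : Fin K2, rho l) * t)

open scoped Nat

theorem Finset.sum_ite_le_tsub {β M : Type*} [AddCommMonoid β] [PartialOrder β]
    [IsOrderedCancelAddMonoid β] [CanonicallyOrderedAdd β] [Sub β] [OrderedSub β]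
    [AddCommMonoid M] [DecidableLE β] (v : β) {s t : Finset β} (hst : ∀ q, q + v ∈ s ↔ q ∈ t)
    (F : β → M) :
    ∑ p ∈ s, (if v ≤ p then F (p - v) else 0) = ∑ q ∈ t, F q := by
  have hinj : Set.InjOn (· + v) ((· + v) ⁻¹' ↑s) := (add_left_injective v).injOn
  have hpre : s.preimage (· + v) hinj = t := by ext q; simp [hst]
  rw [← hpre, ← sum_preimage (· + v) s hinj]
  · simp only [le_add_self, if_true, add_tsub_cancel_right]
  · rintro p - hp
    rw [if_neg]
    exact fun hvp => hp ⟨p - v, tsub_add_cancel_of_le hvp⟩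

theorem Pi.single_one_le_iff {ι : Type*} [DecidableEq ι] {r : ι → ℕ} {i : ι} :
    Pi.single i 1 ≤ r ↔ r i ≠ 0 := by
  refine ⟨fun h => Nat.one_le_iff_ne_zero.mp (by simpa using h i), fun h k => ?_⟩
  rcases eq_or_ne k i with rfl | hk
  · simpa [Nat.one_le_iff_ne_zero] using h
  · simp [Pi.single_eq_of_ne hk]

theorem hasDerivAt_mul_pow_div_factorial (c t : ℝ) (m : ℕ) :
    HasDerivAt (fun s => (c * s) ^ m / m !)
      (if m = 0 then 0 else c * ((c * t) ^ (m - 1) / (m - 1)!)) t := by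
  rcases m with _ | k
  · simpa using hasDerivAt_const t (1 : ℝ)
  · refine ((((hasDerivAt_id' t).const_mul c).fun_pow (k + 1)).div_const _).congr_deriv ?_
    simp only [Nat.factorial_succ, add_tsub_cancel_right, Nat.add_one_ne_zero, if_false]
    push_cast
    field_simp

section PoissonWeight

variable {ι κ : Type*} [Fintype ι] [Fintype κ]

noncomputable def poissonWeight (x : ι → ℝ) (r : ι → ℕ) (t : ℝ) : ℝ :=
  ∏ i, (x i * t) ^ r i / (r i)!

noncomputable def poissonWeightProd (x : ι → ℝ) (y : κ → ℝ) (p : (ι → ℕ) × (κ → ℕ)) (t : ℝ) :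
    ℝ :=
  poissonWeight x p.1 t * poissonWeight y p.2 t

theorem poissonWeight_at_zero (x : ι → ℝ) (r : ι → ℕ) :
    poissonWeight x r 0 = if r = 0 then 1 else 0 := by
  rw [poissonWeight]
  split_ifs with h
  · simp [h]
  · obtain ⟨i, hi⟩ := Function.ne_iff.mp h
    exact prod_eq_zero (mem_univ i) (by simp [zero_pow (show r i ≠ 0 from hi)])

theorem poissonWeightProd_at_zero (x : ι → ℝ) (y : κ → ℝ) (p : (ι → ℕ) × (κ → ℕ)) :
    poissonWeightProd x y p 0 = if p = 0 then 1 else 0 := by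
  simp only [poissonWeightProd, poissonWeight_at_zero, boole_mul, ← ite_and]
  exact if_congr (Prod.ext_iff (y := 0)).symm rfl rfl

variable [DecidableEq ι] [DecidableEq κ]

theorem poissonWeight_tsub_single (x : ι → ℝ) (r : ι → ℕ) (i : ι) (t : ℝ) :
    poissonWeight x (r - Pi.single i 1) t =
      (x i * t) ^ (r i - 1) / (r i - 1)! * ∏ k ∈ univ.erase i, (x k * t) ^ r k / (r k)! := by
  rw [poissonWeight, ← mul_prod_erase _ _ (mem_univ i)]
  congr 1
  · simp
  · refine prod_congr rfl fun k hk => ?_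
    simp [Pi.single_eq_of_ne (ne_of_mem_erase hk)]

theorem hasDerivAt_poissonWeight (x : ι → ℝ) (r : ι → ℕ) (t : ℝ) :
    HasDerivAt (poissonWeight x r)
      (∑ i, if r i = 0 then 0 else x i * poissonWeight x (r - Pi.single i 1) t) t := by
  refine (HasDerivAt.fun_finsetProd fun i _ =>
    hasDerivAt_mul_pow_div_factorial (x i) t (r i)).congr_deriv (sum_congr rfl fun i _ => ?_)
  split_ifs
  · simp
  · rw [poissonWeight_tsub_single, smul_eq_mul]
    ring

open scoped Classical in
theorem hasDerivAt_poissonWeightProd (x : ι → ℝ) (y : κ → ℝ) (p : (ι → ℕ) × (κ → ℕ)) (t : ℝ) :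
    HasDerivAt (poissonWeightProd x y p)
      ((∑ i, x i * if (Pi.single i 1, 0) ≤ p then
          poissonWeightProd x y (p - (Pi.single i 1, 0)) t else 0) +
        ∑ k, y k * if (0, Pi.single k 1) ≤ p then
          poissonWeightProd x y (p - (0, Pi.single k 1)) t else 0) t := by
  refine ((hasDerivAt_poissonWeight x p.1 t).mul (hasDerivAt_poissonWeight y p.2 t)).congr_deriv ?_
  simp only [poissonWeightProd, sum_mul, mul_sum, Prod.le_def, Pi.single_one_le_iff, zero_le,
    and_true, true_and, Prod.fst_sub, Prod.snd_sub, tsub_zero, ite_not]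
  congr 1 <;> refine sum_congr rfl fun i _ => ?_ <;> split_ifs <;> ring

end PoissonWeight

section JointTheta

variable {K1 K2 a n : ℕ}

theorem mem_jointTheta {p : (Fin K1 → ℕ) × (Fin K2 → ℕ)} :
    p ∈ jointTheta K1 K2 a n ↔
      (∑ j : Fin K1, p.1 j = a) ∧
        (∑ j : Fin K1, (j.1 + 1) * p.1 j) + (∑ l : Fin K2, (l.1 + 1) * p.2 l) = n := by
  refine ⟨fun h => (mem_filter.mp h).2, fun h => mem_filter.mpr ⟨mem_product.mpr ⟨?_, ?_⟩, h⟩⟩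
  · refine Fintype.mem_piFinset.mpr fun j => mem_range.mpr (Nat.lt_succ_of_le ?_)
    exact h.1 ▸ single_le_sum (fun _ _ => Nat.zero_le _) (mem_univ j)
  · refine Fintype.mem_piFinset.mpr fun l => mem_range.mpr (Nat.lt_succ_of_le ?_)
    calc p.2 l ≤ (l.1 + 1) * p.2 l := Nat.le_mul_of_pos_left _ l.1.succ_pos
      _ ≤ ∑ l : Fin K2, (l.1 + 1) * p.2 l :=
        single_le_sum (f := fun l : Fin K2 => (l.1 + 1) * p.2 l) (fun _ _ => Nat.zero_le _)
          (mem_univ l)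
      _ ≤ n := h.2 ▸ Nat.le_add_left _ _

theorem add_single_fst_mem_jointTheta {q : (Fin K1 → ℕ) × (Fin K2 → ℕ)} {j : Fin K1} :
    q + (Pi.single j 1, 0) ∈ jointTheta K1 K2 a n ↔
      1 ≤ a ∧ j.1 + 1 ≤ n ∧ q ∈ jointTheta K1 K2 (a - 1) (n - (j.1 + 1)) := by
  simp only [mem_jointTheta, Prod.fst_add, Prod.snd_add, Pi.add_apply, sum_add_distrib, mul_add,
    Pi.zero_apply, add_zero, Pi.single_apply, mul_ite, mul_one, mul_zero, sum_ite_eq', mem_univ,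
    if_true]
  omega

theorem add_single_snd_mem_jointTheta {q : (Fin K1 → ℕ) × (Fin K2 → ℕ)} {l : Fin K2} :
    q + (0, Pi.single l 1) ∈ jointTheta K1 K2 a n ↔
      l.1 + 1 ≤ n ∧ q ∈ jointTheta K1 K2 a (n - (l.1 + 1)) := by
  simp only [mem_jointTheta, Prod.fst_add, Prod.snd_add, Pi.add_apply, sum_add_distrib, mul_add,
    Pi.zero_apply, add_zero, Pi.single_apply, mul_ite, mul_one, mul_zero, sum_ite_eq', mem_univ,
    if_true]
  omega

open scoped Classical in
theorem sum_jointTheta_shift_fst {M : Type*} [AddCommMonoid M]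
    (F : (Fin K1 → ℕ) × (Fin K2 → ℕ) → M) (j : Fin K1) :
    ∑ p ∈ jointTheta K1 K2 a n,
        (if (Pi.single j 1, 0) ≤ p then F (p - (Pi.single j 1, 0)) else 0) =
      if 1 ≤ a ∧ j.1 + 1 ≤ n then ∑ q ∈ jointTheta K1 K2 (a - 1) (n - (j.1 + 1)), F q else 0 := by
  split_ifs with h
  · exact sum_ite_le_tsub _ (fun q => by simp [add_single_fst_mem_jointTheta, h]) F
  · simpa using sum_ite_le_tsub (t := ∅) _
      (fun q => by simp only [add_single_fst_mem_jointTheta, notMem_empty, iff_false]; tauto) F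

open scoped Classical in
theorem sum_jointTheta_shift_snd {M : Type*} [AddCommMonoid M]
    (F : (Fin K1 → ℕ) × (Fin K2 → ℕ) → M) (l : Fin K2) :
    ∑ p ∈ jointTheta K1 K2 a n,
        (if (0, Pi.single l 1) ≤ p then F (p - (0, Pi.single l 1)) else 0) =
      if l.1 + 1 ≤ n then ∑ q ∈ jointTheta K1 K2 a (n - (l.1 + 1)), F q else 0 := by
  split_ifs with h
  · exact sum_ite_le_tsub _ (fun q => by simp [add_single_snd_mem_jointTheta, h]) F
  · simpa using sum_ite_le_tsub (t := ∅) _ (fun q => by simp [add_single_snd_mem_jointTheta, h]) F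

end JointTheta

section JointPoly

variable (K1 K2 : ℕ) (nu : Fin K1 → ℝ) (rho : Fin K2 → ℝ)

noncomputable def jointPoly (a n : ℕ) (t : ℝ) : ℝ :=
  ∑ p ∈ jointTheta K1 K2 a n, poissonWeightProd nu rho p t

theorem jointPMF_eq_jointPoly_mul_exp (a n : ℕ) (t : ℝ) :
    jointPMF K1 K2 nu rho a n t = jointPoly K1 K2 nu rho a n t *
      Real.exp (-((∑ j : Fin K1, nu j) + ∑ l : Fin K2, rho l) * t) := by
  rw [jointPoly, sum_mul]
  rfl

theorem hasDerivAt_jointPoly (a n : ℕ) (t : ℝ) :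
    HasDerivAt (jointPoly K1 K2 nu rho a n)
      ((∑ j : Fin K1, nu j *
          (if 1 ≤ a ∧ j.1 + 1 ≤ n then jointPoly K1 K2 nu rho (a - 1) (n - (j.1 + 1)) t else 0))
        + ∑ l : Fin K2, rho l *
          (if l.1 + 1 ≤ n then jointPoly K1 K2 nu rho a (n - (l.1 + 1)) t else 0)) t := by
  refine (HasDerivAt.fun_sum fun p _ => hasDerivAt_poissonWeightProd nu rho p t).congr_deriv ?_
  rw [sum_add_distrib, sum_comm (s := jointTheta K1 K2 a n),
    sum_comm (s := jointTheta K1 K2 a n)]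
  simp only [← mul_sum, jointPoly, sum_jointTheta_shift_fst (poissonWeightProd nu rho · t),
    sum_jointTheta_shift_snd (poissonWeightProd nu rho · t)]

theorem jointPMF_at_zero (a n : ℕ) :
    jointPMF K1 K2 nu rho a n 0 = if a = 0 ∧ n = 0 then 1 else 0 := by
  have hzero : (0 : (Fin K1 → ℕ) × (Fin K2 → ℕ)) ∈ jointTheta K1 K2 a n ↔ a = 0 ∧ n = 0 := by
    simp [mem_jointTheta, eq_comm]
  simp only [jointPMF_eq_jointPoly_mul_exp, jointPoly, poissonWeightProd_at_zero, mul_zero,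
    Real.exp_zero, mul_one, sum_ite_eq', hzero]

end JointPoly

theorem jointPMF_ode_general (K1 K2 : ℕ)
    (nu : Fin K1 → ℝ) (rho : Fin K2 → ℝ) :
    (∀ (a n : ℕ) (t : ℝ), 0 ≤ t →
      HasDerivAt (fun s => jointPMF K1 K2 nu rho a n s)
        (-((∑ j : Fin K1, nu j) + ∑ l : Fin K2, rho l) * jointPMF K1 K2 nu rho a n t
          + (∑ j : Fin K1, nu j *
              (if 1 ≤ a ∧ j.1 + 1 ≤ n then
                jointPMF K1 K2 nu rho (a - 1) (n - (j.1 + 1)) t else 0))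
          + (∑ l : Fin K2, rho l *
              (if l.1 + 1 ≤ n then jointPMF K1 K2 nu rho a (n - (l.1 + 1)) t else 0)))
        t) ∧
    jointPMF K1 K2 nu rho 0 0 0 = 1 ∧
    (∀ a n : ℕ, (a, n) ≠ (0, 0) → jointPMF K1 K2 nu rho a n 0 = 0) := by
  refine ⟨fun a n t _ => ?_, by simp [jointPMF_at_zero], fun a n h => ?_⟩
  · set Λ := (∑ j : Fin K1, nu j) + ∑ l : Fin K2, rho l
    have hexp : HasDerivAt (fun s => Real.exp (-Λ * s)) (Real.exp (-Λ * t) * -Λ) t := by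
      simpa using ((hasDerivAt_id t).const_mul (-Λ)).exp
    simp only [jointPMF_eq_jointPoly_mul_exp]
    refine ((hasDerivAt_jointPoly K1 K2 nu rho a n t).mul hexp).congr_deriv ?_
    simp only [add_mul, sum_mul, ite_mul, zero_mul, mul_assoc]
    ring
  · simpa [jointPMF_at_zero] using fun ha hn => h (by simp [ha, hn])

/-- The joint pmf `q(a, n, t)` of the number of packets from the tracked component
and the state of the merged GCP satisfies the forward differential equation
`q'(a,n,t) = −Λ q(a,n,t) + Σ_j ν_j q(a−1, n−j, t) + Σ_l ρ_l q(a, n−l, t)`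
(terms with a negative index vanish), with initial conditions `q(0,0,0) = 1` and
`q(a,n,0) = 0` for `(a,n) ≠ (0,0)`. -/
theorem jointPMF_ode (K1 K2 : ℕ) (hK1 : 1 ≤ K1) (hK2 : 1 ≤ K2)
    (nu : Fin K1 → ℝ) (rho : Fin K2 → ℝ)
    (hnu : ∀ j, 0 ≤ nu j) (hrho : ∀ l, 0 ≤ rho l) :
    (∀ (a n : ℕ) (t : ℝ), 0 ≤ t →
      HasDerivAt (fun s => jointPMF K1 K2 nu rho a n s)
        (-((∑ j : Fin K1, nu j) + ∑ l : Fin K2, rho l) * jointPMF K1 K2 nu rho a n t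
          + (∑ j : Fin K1, nu j *
              (if 1 ≤ a ∧ j.1 + 1 ≤ n then
                jointPMF K1 K2 nu rho (a - 1) (n - (j.1 + 1)) t else 0))
          + (∑ l : Fin K2, rho l *
              (if l.1 + 1 ≤ n then jointPMF K1 K2 nu rho a (n - (l.1 + 1)) t else 0)))
        t) ∧
    jointPMF K1 K2 nu rho 0 0 0 = 1 ∧
    (∀ a n : ℕ, (a, n) ≠ (0, 0) → jointPMF K1 K2 nu rho a n 0 = 0) :=
  jointPMF_ode_general K1 K2 nu rho
end
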